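/- E_φ is multiplicatively closed: for all x, y ∈ E_φ, the product x·y in ℤ[E×] lies in E_φ ∪ {0}. -/

import Mathlib

set_option linter.unusedSectionVars false

/-- A *semilattice with zero*: a commutative idempotent semigroup with an
absorbing element `0`. -/
class SemilatticeWithZero (E : Type) extends CommSemigroup E, Zero E where
  mul_idem : ∀ e : E, e * e = e
  zero_mul : ∀ e : E, 0 * e = 0

namespace IndRes

variable {E : Type} [SemilatticeWithZero E]

/-- `single e c`, viewed in the semigroup algebra `ℤ[E]`. -/
noncomputable def sgl (e : E) (c : ℤ) : MonoidAlgebra ℤ E := MonoidAlgebra.single e c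

/-- Truncation map deleting the coefficient at `0`. -/
noncomputable def T (x : MonoidAlgebra ℤ E) : MonoidAlgebra ℤ E := x - sgl 0 (x.coeff 0)

lemma sgl_apply_self (e : E) (c : ℤ) : (sgl e c).coeff e = c := by
  simp [sgl, MonoidAlgebra.coeff_single]

lemma sgl_apply_ne (e d : E) (c : ℤ) (h : e ≠ d) : (sgl e c).coeff d = 0 := by
  simp [sgl, MonoidAlgebra.coeff_single, Finsupp.single_apply, h]

lemma sgl_add (e : E) (c d : ℤ) : sgl e (c + d) = sgl e c + sgl e d := MonoidAlgebra.single_add e c d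

lemma sgl_sub (e : E) (c d : ℤ) : sgl e (c - d) = sgl e c - sgl e d := MonoidAlgebra.single_sub e c d

lemma T_apply_zero (x : MonoidAlgebra ℤ E) : (T x).coeff 0 = 0 := by
  show ((x - sgl 0 (x.coeff 0) : MonoidAlgebra ℤ E)).coeff 0 = 0
  rw [MonoidAlgebra.coeff_sub, Finsupp.sub_apply, sgl_apply_self, sub_self]

/-- `ℤ[E^×]`, realized as the additive subgroup of the semigroup algebra
`ℤ[E]` consisting of the elements whose coefficient at `0` vanishes; it is the free
`ℤ`-module with basis `E^× = E \ {0}`. -/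
noncomputable def ZS (E : Type) [SemilatticeWithZero E] : AddSubgroup (MonoidAlgebra ℤ E) where
  carrier := {x | x.coeff 0 = 0}
  zero_mem' := rfl
  add_mem' := by
    intro a b ha hb
    simp only [Set.mem_setOf_eq] at *
    rw [MonoidAlgebra.coeff_add, Finsupp.add_apply, ha, hb, add_zero]
  neg_mem' := by
    intro a ha
    simp only [Set.mem_setOf_eq] at *
    rw [MonoidAlgebra.coeff_neg, Finsupp.neg_apply, ha, neg_zero]

/-- The integral semigroup ring `ℤ[E^×]`. -/
abbrev ZE (E : Type) [SemilatticeWithZero E] : Type := ↥(ZS E)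

lemma mem_ZS {x : MonoidAlgebra ℤ E} : x ∈ ZS E ↔ x.coeff 0 = 0 := Iff.rfl

lemma T_eq_self {x : MonoidAlgebra ℤ E} (h : x.coeff 0 = 0) : T x = x := by
  simp [T, h, sgl]

lemma T_add (a b : MonoidAlgebra ℤ E) : T (a + b) = T a + T b := by
  unfold T
  rw [show ((a + b).coeff 0) = a.coeff 0 + b.coeff 0 from Finsupp.add_apply a.coeff b.coeff 0, sgl_add]
  abel

lemma T_sub_sgl (x : MonoidAlgebra ℤ E) (m : ℤ) : T (x - sgl 0 m) = T x := by
  unfold T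
  have h : ((x - sgl 0 m : MonoidAlgebra ℤ E)).coeff 0 = x.coeff 0 - m := by
    rw [MonoidAlgebra.coeff_sub, Finsupp.sub_apply, sgl_apply_self]
  rw [h, sgl_sub]
  abel

lemma single_zero_mul (c : ℤ) (b : MonoidAlgebra ℤ E) :
    (sgl 0 c) * b = sgl 0 (((sgl 0 c * b : MonoidAlgebra ℤ E)).coeff 0) := by
  classical
  ext d
  by_cases hd : d = 0
  · subst hd; rw [sgl_apply_self]
  · rw [sgl_apply_ne 0 d _ (Ne.symm hd)]
    by_contra h
    have hmem : d ∈ ((sgl (0:E) c) * b).coeff.support := Finsupp.mem_support_iff.mpr h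
    have h2 := MonoidAlgebra.support_coeff_mul_subset (sgl (0:E) c) b hmem
    rw [Finset.mem_mul] at h2
    obtain ⟨a, ha, b', _, hab⟩ := h2
    have ha' : a = 0 := by
      have := Finsupp.support_single_subset (ha : a ∈ (Finsupp.single (0:E) c).support)
      simpa using this
    exact hd (by rw [← hab, ha', SemilatticeWithZero.zero_mul])

lemma T_mul_left (a b : MonoidAlgebra ℤ E) : T (T a * b) = T (a * b) := by
  have h1 : T a * b = a * b - (sgl 0 (a.coeff 0)) * b := by rw [T, sub_mul]
  rw [h1, single_zero_mul, T_sub_sgl]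

lemma T_mul_right (a b : MonoidAlgebra ℤ E) : T (a * T b) = T (a * b) := by
  rw [mul_comm a (T b), T_mul_left, mul_comm]

noncomputable instance : Mul (ZE E) :=
  ⟨fun x y => ⟨T (x.1 * y.1), T_apply_zero _⟩⟩

lemma ZE.val_mul (x y : ZE E) : (x * y).1 = T (x.1 * y.1) := rfl

noncomputable instance : NonUnitalCommRing (ZE E) :=
  { (inferInstance : AddCommGroup (ZE E)) with
    mul := (· * ·)
    left_distrib := by
      intro x y z
      apply Subtype.ext
      show T (x.1 * (y.1 + z.1)) = T (x.1 * y.1) + T (x.1 * z.1)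
      rw [mul_add, T_add]
    right_distrib := by
      intro x y z
      apply Subtype.ext
      show T ((x.1 + y.1) * z.1) = T (x.1 * z.1) + T (y.1 * z.1)
      rw [add_mul, T_add]
    zero_mul := by
      intro x
      apply Subtype.ext
      show T ((0 : MonoidAlgebra ℤ E) * x.1) = 0
      rw [zero_mul]
      simp [T, sgl]
    mul_zero := by
      intro x
      apply Subtype.ext
      show T (x.1 * (0 : MonoidAlgebra ℤ E)) = 0
      rw [mul_zero]
      simp [T, sgl]
    mul_assoc := by
      intro x y z
      apply Subtype.ext
      show T (T (x.1 * y.1) * z.1) = T (x.1 * T (y.1 * z.1))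
      rw [T_mul_left, T_mul_right, mul_assoc]
    mul_comm := by
      intro x y
      apply Subtype.ext
      show T (x.1 * y.1) = T (y.1 * x.1)
      rw [mul_comm] }

/-- The canonical image of `e ∈ E` in `ℤ[E^×]`: the basis element `e` if `e ≠ 0`,
and `0` if `e = 0`. -/
noncomputable def elt (e : E) : ZE E := ⟨T (sgl e 1), T_apply_zero _⟩

/-- Product of a (nonempty) finite family in a commutative non-unital ring, computed inside
the unitization.  For a nonempty index set this is the iterated product. -/
noncomputable def nprod {ι A : Type} [NonUnitalCommRing A] (s : Finset ι) (f : ι → A) : A :=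
  (∏ j ∈ s, (Unitization.inr (f j) : Unitization ℤ A)).snd

/-- The join `⋁_{j ∈ J} x_j = ∑_{∅ ≠ J' ⊆ J} (-1)^{|J'|+1} ∏_{j ∈ J'} x_j`
of a finite family of idempotents of a commutative non-unital ring. -/
noncomputable def rjoin {ι A : Type} [NonUnitalCommRing A] (s : Finset ι) (f : ι → A) : A :=
  ∑ t ∈ s.powerset.filter (fun t => t.Nonempty), ((-1 : ℤ) ^ (t.card + 1)) • nprod t f

/-- The join `⋁_{j ∈ J} e_j ∈ ℤ[E^×]` of a finite family of elements of `E`: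
`∑_{∅ ≠ J' ⊆ J} (-1)^{|J'|+1} ∏_{j ∈ J'} e_j`, where a product whose value in `E`
is `0` contributes `0`. -/
noncomputable def join {ι : Type} (s : Finset ι) (e : ι → E) : ZE E :=
  rjoin s (fun j => elt (e j))

/-- Iterated product of a nonempty list in a semigroup with zero (the value on the
empty list is the junk value `0`). -/
def listProd : List E → E
  | [] => 0
  | [a] => a
  | a :: b :: l => a * listProd (b :: l)

/-- The product `∏_{j ∈ s} f j ∈ E` of a (nonempty) finite family. -/
noncomputable def eprod {ι : Type} (s : Finset ι) (f : ι → E) : E :=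
  listProd (s.toList.map f)

/-- The support `E(x)` of `x ∈ ℤ[E^×]`: the finite set of elements of `E^×` appearing
with a nonzero coefficient in the reduced form of `x`. -/
noncomputable def supp (x : ZE E) : Finset E := x.1.coeff.support

section Action

variable {Γ : Type} [Group Γ] [MulAction Γ E]

/-- The induced action of `g ∈ Γ` on `ℤ[E^×]`: the `ℤ`-linear map sending a basis
element `e ∈ E^×` to `g • e`.  (When the action fixes `0` — which is the case for an
action by semigroup automorphisms fixing `0` — the truncation `T` is a no-op, and this
is the automorphism of `ℤ[E^×]` induced by `τ_g`.) -/
noncomputable def act (g : Γ) (x : ZE E) : ZE E :=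
  ⟨T (MonoidAlgebra.mapDomain (fun e : E => g • e) x.1), T_apply_zero _⟩

end Action



attribute [local instance] Classical.propDecidable

variable {E : Type} [SemilatticeWithZero E]

/-- A Γ-semilattice structure: the group acts by semigroup automorphisms fixing `0`. -/
def IsGammaSL (Γ E : Type) [Group Γ] [SemilatticeWithZero E] [MulAction Γ E] : Prop :=
  (∀ (g : Γ) (x y : E), g • (x * y) = (g • x) * (g • y)) ∧ (∀ g : Γ, g • (0 : E) = 0)

/-- The set `E_φ`. -/
def Ephi {D : Type} [NonUnitalCommRing D] (φ : ZE E →ₙ+* D) : Set (ZE E) :=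
  { x | ∃ (e : E) (J : Finset E), e ≠ 0 ∧ (∀ f ∈ J, f ≠ 0 ∧ f * e = f ∧ f ≠ e) ∧
      x = elt e - join J (fun f => f) ∧
      φ (elt e) = rjoin J (fun f => φ (elt f)) }

/-- `R` is a finite cover for `e ∈ E^×`. -/
def IsCover (e : E) (R : Finset E) : Prop :=
  (∀ f ∈ R, f ≠ 0 ∧ f * e = f) ∧
  ∀ f' : E, f' ≠ 0 → f' * e = f' → ∃ f ∈ R, f' * f ≠ 0

/-- `ℛ` is a collection of finite covers for `E`. -/
def CovSystem (ℛ : E → Set (Finset E)) : Prop :=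
  ∀ e : E, e ≠ 0 → ∀ R ∈ ℛ e, IsCover e R

/-- Condition (i). -/
def CondI (ℛ : E → Set (Finset E)) : Prop :=
  ∀ d e : E, d ≠ 0 → e ≠ 0 → d * e ≠ 0 → ∀ R ∈ ℛ e,
    d * e ∈ (R.image (fun f => d * f)).erase 0 ∨ (R.image (fun f => d * f)).erase 0 ∈ ℛ (d * e)

/-- Condition (ii). -/
def CondII (ℛ : E → Set (Finset E)) : Prop :=
  ∀ e : E, e ≠ 0 → ∀ r : ℕ, 0 < r → ∀ Rs : Fin r → Finset E,
    Function.Injective Rs → (∀ i, Rs i ∈ ℛ e) → ∀ ε : Fin r → E,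
    (∀ i, ε i ∈ supp (join (Rs i) (fun f => f))) → ∀ j : Fin r,
      (if r = 1 then e else eprod (Finset.univ.erase j) ε) ≠ 0 →
      eprod Finset.univ ε * (if r = 1 then e else eprod (Finset.univ.erase j) ε)
          = eprod Finset.univ ε ∧
      eprod Finset.univ ε ≠ (if r = 1 then e else eprod (Finset.univ.erase j) ε)

/-- Condition (iii). -/
def CondIII (Γ : Type) [Group Γ] [MulAction Γ E] (ℛ : E → Set (Finset E)) : Prop :=
  ∀ (g : Γ) (e : E), e ≠ 0 →
    (fun R : Finset E => R.image (fun f => g • f)) '' (ℛ e) = ℛ (g • e)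

/-- `e(𝒮) = ∏_{R ∈ 𝒮} (e - ⋁R) ∈ ℤ[E^×]`. -/
noncomputable def eS (e : E) (S : Finset (Finset E)) : ZE E :=
  nprod S (fun R => elt e - join R (fun f => f))

/-- `E(E,ℛ) = {e(𝒮) : e ∈ E^×, 𝒮 ⊆ ℛ(e) nonempty finite} ∪ {0} ⊆ ℤ[E^×]`. -/
def EER (ℛ : E → Set (Finset E)) : Set (ZE E) :=
  {x | ∃ (e : E) (S : Finset (Finset E)), e ≠ 0 ∧ S.Nonempty ∧ ↑S ⊆ ℛ e ∧ x = eS e S} ∪ {0}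

/-- `R(𝒮,R̃) = {e(𝒮 ∪ {R̃})} ∪ {f ⬝ e(𝒮) : f ∈ R̃, f ⬝ e(𝒮) ≠ 0}`. -/
noncomputable def RSR (e : E) (S : Finset (Finset E)) (Rt : Finset E) : Finset (ZE E) :=
  insert (eS e (insert Rt S)) ((Rt.image (fun f => elt f * eS e S)).erase 0)

/-- The collection of finite covers `ℛ(E,ℛ)` on `E(E,ℛ)`, assigning to an element
`x = e(𝒮)` of `E(E,ℛ)^×` the covers `R(𝒮,R̃)`, `R̃ ∈ ℛ(e) ∖ 𝒮` (over all ways of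
presenting `x` in the form `e(𝒮)`). -/
def RER (ℛ : E → Set (Finset E)) (x : ZE E) : Set (Finset (ZE E)) :=
  {C | ∃ (e : E) (S : Finset (Finset E)) (Rt : Finset E),
        e ≠ 0 ∧ S.Nonempty ∧ ↑S ⊆ ℛ e ∧ Rt ∈ ℛ e ∧ Rt ∉ S ∧ x = eS e S ∧ C = RSR e S Rt}

/-- The `ℤ`-linear map `ℤ[E₁^×] → ℤ[E₂^×]` induced by a map `θ` from `E₁` to `ℤ[E₂^×]`,
sending a basis element `e' ∈ E₁^×` to `θ e'`. -/
noncomputable def indMap {E₁ E₂ : Type} [SemilatticeWithZero E₁] [SemilatticeWithZero E₂]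
    (θ : E₁ → ZE E₂) : ZE E₁ →ₗ[ℤ] ZE E₂ :=
  (Finsupp.linearCombination ℤ θ).comp
    ((MonoidAlgebra.coeffLinearEquiv ℤ).toLinearMap.comp (ZS E₁).subtype.toIntLinearMap)

/-- `(E₁, ℛ₁, θ)` is a realization of the construction `(E(E,ℛ), ℛ(E,ℛ))`:
`θ` identifies the abstract Γ-semilattice `E₁` with `E(E,ℛ) ⊆ ℤ[E^×]` (equivariantly,
multiplicatively and preserving `0`), and `ℛ₁` corresponds to `ℛ(E,ℛ)` under this
identification. -/
def Realizes {Γ E E₁ : Type} [Group Γ] [SemilatticeWithZero E] [MulAction Γ E]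
    [SemilatticeWithZero E₁] [MulAction Γ E₁]
    (ℛ : E → Set (Finset E)) (ℛ₁ : E₁ → Set (Finset E₁)) (θ : E₁ → ZE E) : Prop :=
  Function.Injective θ ∧ Set.range θ = EER ℛ ∧ θ 0 = 0 ∧
  (∀ x y : E₁, θ (x * y) = θ x * θ y) ∧
  (∀ (g : Γ) (x : E₁), θ (g • x) = act g (θ x)) ∧
  (∀ e' : E₁, e' ≠ 0 → ∀ C : Finset E₁, C ∈ ℛ₁ e' ↔ C.image θ ∈ RER ℛ (θ e'))

end IndRes

open IndRes

/-! In the unitization of `ℤ[E^×]`, an element `e - ⋁J` with every `f ∈ J` below `e` equals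
`e · ∏_{f ∈ J} (1 - f)`. The product of two such elements is therefore
`ee' · ∏_{f ∈ J} (1 - fe') · ∏_{g ∈ J'} (1 - eg)`, and since the factors `1 - d` are idempotent
this is `ee' - ⋁K` for the set `K` of nonzero elements `fe'`, `eg`; it vanishes when `ee' = 0`
or `ee' ∈ K`. Finally `φ` kills every element of `E_φ` and is multiplicative, so it kills
`ee' - ⋁K`, which is the condition for `ee' - ⋁K ∈ E_φ`. -/

namespace IndRes

open Unitization Finset

section CommMonoid

variable {ι κ M : Type} [CommMonoid M]

lemma mul_prod_congr {s : Finset ι} {u : M} {a b : ι → M} (h : ∀ j ∈ s, u * a j = u * b j) :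
    u * ∏ j ∈ s, a j = u * ∏ j ∈ s, b j := by
  induction s using Finset.cons_induction with
  | empty => rfl
  | cons i s hi ih =>
    rw [prod_cons, prod_cons, mul_left_comm, ih fun j hj => h j (mem_cons_of_mem hj),
      ← mul_assoc, mul_comm (a i), h i (mem_cons_self i s), mul_assoc]

lemma mul_prod_eq_self {s : Finset ι} {u : M} {a : ι → M} (h : ∀ j ∈ s, u * a j = u) :
    u * ∏ j ∈ s, a j = u := by
  simpa using mul_prod_congr (b := fun _ => 1) fun j hj => (h j hj).trans (mul_one u).symm

variable {p : κ → M}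

lemma prod_image_of_isIdempotentElem [DecidableEq κ] (hp : ∀ k, IsIdempotentElem (p k))
    (s : Finset ι) (m : ι → κ) : ∏ k ∈ s.image m, p k = ∏ i ∈ s, p (m i) := by
  refine prod_image' _ fun i hi => ?_
  rw [prod_congr rfl fun j hj => congrArg p (mem_filter.mp hj).2, prod_const]
  exact ((hp (m i)).pow_eq
    (card_ne_zero_of_mem (s := s.filter (m · = m i)) (mem_filter.mpr ⟨hi, rfl⟩))).symm

lemma isIdempotentElem_prod (hp : ∀ k, IsIdempotentElem (p k)) (s : Finset κ) :
    IsIdempotentElem (∏ k ∈ s, p k) := by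
  rw [IsIdempotentElem, ← prod_mul_distrib]
  exact prod_congr rfl fun k _ => hp k

lemma prod_union_of_isIdempotentElem [DecidableEq κ] (hp : ∀ k, IsIdempotentElem (p k))
    (s t : Finset κ) : ∏ k ∈ s ∪ t, p k = (∏ k ∈ s, p k) * ∏ k ∈ t, p k := by
  rw [← prod_union_inter, ← prod_sdiff (inter_subset_union : s ∩ t ⊆ s ∪ t), mul_assoc,
    isIdempotentElem_prod hp]

end CommMonoid

section NonUnitalCommRing

variable {ι A B : Type} [NonUnitalCommRing A] [NonUnitalCommRing B]

lemma inr_nprod {t : Finset ι} (ht : t.Nonempty) (f : ι → A) :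
    (inr (nprod t f) : Unitization ℤ A) = ∏ j ∈ t, inr (f j) := by
  classical
  obtain ⟨i, hi⟩ := ht
  ext
  · rw [fst_inr, ← mul_prod_erase t _ hi, fst_mul, fst_inr, zero_mul]
  · rfl

lemma nprod_cons (i : ι) {t : Finset ι} (hi : i ∉ t) (ht : t.Nonempty) (f : ι → A) :
    nprod (t.cons i hi) f = f i * nprod t f := by
  apply inr_injective (R := ℤ)
  rw [inr_mul, inr_nprod (cons_nonempty hi), inr_nprod ht, prod_cons]

lemma map_nprod (φ : A →ₙ+* B) {t : Finset ι} (ht : t.Nonempty) (f : ι → A) :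
    φ (nprod t f) = nprod t (fun j => φ (f j)) := by
  induction ht using Finset.Nonempty.cons_induction with
  | singleton i => simp [nprod]
  | cons i t hi ht ih => rw [nprod_cons i hi ht, nprod_cons i hi ht, map_mul, ih]

lemma map_rjoin (φ : A →ₙ+* B) (s : Finset ι) (f : ι → A) :
    φ (rjoin s f) = rjoin s (fun j => φ (f j)) := by
  rw [rjoin, map_sum]
  exact sum_congr rfl fun t ht => by rw [map_zsmul, map_nprod φ (mem_filter.mp ht).2]

lemma inr_rjoin (s : Finset ι) (f : ι → A) :
    (inr (rjoin s f) : Unitization ℤ A) = 1 - ∏ j ∈ s, (1 - inr (f j)) := by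
  classical
  have hnonempty : s.powerset.filter (fun t => t.Nonempty) = s.powerset.erase ∅ := by
    ext t
    simp [nonempty_iff_ne_empty, and_comm]
  rw [prod_sub (fun _ => 1) (fun j => (inr (f j) : Unitization ℤ A)),
    ← add_sum_erase _ _ (empty_mem_powerset s), ← hnonempty]
  change inrNonUnitalAlgHom ℤ A (rjoin s f) = _
  rw [rjoin, map_sum]
  simp only [card_empty, pow_zero, sdiff_empty, prod_const_one, prod_empty, mul_one,
    sub_add_cancel_left, ← sum_neg_distrib]
  refine sum_congr rfl fun t ht => ?_
  rw [map_zsmul, inrNonUnitalAlgHom_toFun, inr_nprod (mem_filter.mp ht).2, zsmul_eq_mul,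
    Int.cast_pow (R := Unitization ℤ A), Int.cast_neg (R := Unitization ℤ A),
    Int.cast_one (R := Unitization ℤ A)]
  ring

end NonUnitalCommRing

variable {E : Type} [SemilatticeWithZero E]

lemma elt_zero : elt (0 : E) = 0 :=
  Subtype.ext <| sub_eq_zero.mpr (by rw [sgl_apply_self])

lemma elt_mul (a b : E) : elt a * elt b = elt (a * b) := by
  apply Subtype.ext
  change T (T (sgl a 1) * T (sgl b 1)) = T (sgl (a * b) 1)
  rw [T_mul_left, T_mul_right, sgl, sgl, sgl, MonoidAlgebra.single_mul_single, one_mul]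

lemma inr_elt_mul_inr_elt (a b : E) :
    (inr (elt a) * inr (elt b) : Unitization ℤ (ZE E)) = inr (elt (a * b)) := by
  rw [← inr_mul, elt_mul]

lemma isIdempotentElem_one_sub_inr_elt (a : E) :
    IsIdempotentElem (1 - inr (elt a) : Unitization ℤ (ZE E)) :=
  IsIdempotentElem.one_sub <| by
    rw [IsIdempotentElem, inr_elt_mul_inr_elt, SemilatticeWithZero.mul_idem]

lemma inr_elt_sub_join {c : E} {K : Finset E} (hK : ∀ d ∈ K, d * c = d) :
    (inr (elt c - join K (fun f => f)) : Unitization ℤ (ZE E))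
      = inr (elt c) * ∏ d ∈ K, (1 - inr (elt d)) := by
  have hfix : (inr (elt c) - 1 : Unitization ℤ (ZE E)) * ∏ d ∈ K, (1 - inr (elt d))
      = inr (elt c) - 1 :=
    mul_prod_eq_self fun d hd => by
      rw [sub_mul, mul_sub, inr_elt_mul_inr_elt, mul_comm, hK d hd]
      ring
  rw [inr_sub, join, inr_rjoin]
  linear_combination -hfix

lemma inr_elt_mul_prod_one_sub_congr {c : E} {s : Finset E} {b : E → E}
    (h : ∀ d ∈ s, c * d = c * b d) :
    (inr (elt c) : Unitization ℤ (ZE E)) * ∏ d ∈ s, (1 - inr (elt d))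
      = inr (elt c) * ∏ d ∈ s, (1 - inr (elt (b d))) :=
  mul_prod_congr fun d hd => by
    rw [mul_sub, mul_sub, inr_elt_mul_inr_elt, inr_elt_mul_inr_elt, h d hd]

lemma elt_sub_join_eq_zero {c : E} {K : Finset E} (hK : ∀ d ∈ K, d * c = d)
    (hc : c = 0 ∨ c ∈ K) : elt c - join K (fun f => f) = 0 := by
  classical
  apply inr_injective (R := ℤ)
  rw [inr_elt_sub_join hK, inr_zero]
  rcases hc with rfl | hc
  · rw [elt_zero, inr_zero, zero_mul]
  · rw [← mul_prod_erase K _ hc, ← mul_assoc, mul_sub, mul_one, inr_elt_mul_inr_elt,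
      SemilatticeWithZero.mul_idem, sub_self, zero_mul]

open Classical in
noncomputable def productIndex (e e' : E) (J J' : Finset E) : Finset E :=
  ((J.image (· * e')) ∪ (J'.image (e * ·))).erase 0

lemma mul_eq_of_mem_productIndex {e e' d : E} {J J' : Finset E} (hJ : ∀ f ∈ J, f * e = f)
    (hJ' : ∀ g ∈ J', g * e' = g) (hd : d ∈ productIndex e e' J J') : d * (e * e') = d := by
  simp only [productIndex, mem_erase, mem_union, mem_image] at hd
  rcases hd.2 with ⟨f, hf, rfl⟩ | ⟨g, hg, rfl⟩
  · rw [mul_mul_mul_comm, hJ f hf, SemilatticeWithZero.mul_idem]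
  · rw [mul_mul_mul_comm, SemilatticeWithZero.mul_idem, hJ' g hg]

lemma ne_zero_of_mem_productIndex {e e' d : E} {J J' : Finset E}
    (hd : d ∈ productIndex e e' J J') : d ≠ 0 := by
  classical
  exact (Finset.mem_erase.mp hd).1

lemma elt_sub_join_mul_elt_sub_join {e e' : E} {J J' : Finset E} (hJ : ∀ f ∈ J, f * e = f)
    (hJ' : ∀ g ∈ J', g * e' = g) :
    (elt e - join J (fun f => f)) * (elt e' - join J' (fun f => f))
      = elt (e * e') - join (productIndex e e' J J') (fun f => f) := by
  classical
  have hp := isIdempotentElem_one_sub_inr_elt (E := E)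
  have hJ_shift :=
    inr_elt_mul_prod_one_sub_congr (c := e * e') (s := J) (b := (· * e')) fun f _ => by
      rw [show e * e' * (f * e') = e * f * (e' * e') by ac_rfl, SemilatticeWithZero.mul_idem]
      ac_rfl
  have hJ'_shift :=
    inr_elt_mul_prod_one_sub_congr (c := e * e') (s := J') (b := (e * ·)) fun g _ => by
      rw [show e * e' * (e * g) = e * e * (e' * g) by ac_rfl, SemilatticeWithZero.mul_idem]
      ac_rfl
  apply inr_injective (R := ℤ)
  rw [inr_mul, inr_elt_sub_join hJ, inr_elt_sub_join hJ',
    inr_elt_sub_join fun d hd => mul_eq_of_mem_productIndex hJ hJ' hd, productIndex,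
    prod_erase _ (by rw [elt_zero, inr_zero, sub_zero]), prod_union_of_isIdempotentElem hp,
    prod_image_of_isIdempotentElem hp, prod_image_of_isIdempotentElem hp, ← mul_assoc]
  calc _ = ((inr (elt (e * e')) : Unitization ℤ (ZE E)) * ∏ f ∈ J, (1 - inr (elt f)))
        * ∏ g ∈ J', (1 - inr (elt g)) := by
        rw [← inr_elt_mul_inr_elt]; ring
    _ = _ := by
        rw [hJ_shift]
        linear_combination
          (∏ f ∈ J, (1 - (inr (elt (f * e')) : Unitization ℤ (ZE E)))) * hJ'_shift

lemma mem_Ephi_iff {D : Type} [NonUnitalCommRing D] (φ : ZE E →ₙ+* D) (x : ZE E) :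
    x ∈ Ephi φ ↔ ∃ (e : E) (J : Finset E), e ≠ 0 ∧ (∀ f ∈ J, f ≠ 0 ∧ f * e = f ∧ f ≠ e) ∧
      x = elt e - join J (fun f => f) ∧ φ x = 0 := by
  refine exists₂_congr fun e J => and_congr_right fun _ => and_congr_right fun _ => ?_
  refine and_congr_right fun hx => ?_
  rw [hx, map_sub, join, map_rjoin, sub_eq_zero]

end IndRes

theorem statement_2_general {E D : Type} [SemilatticeWithZero E] [NonUnitalCommRing D]
    (φ : ZE E →ₙ+* D) :
    ∀ x ∈ Ephi φ, ∀ y ∈ Ephi φ, x * y ∈ Ephi φ ∪ {0} := by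
  intro x hx y hy
  obtain ⟨e, J, -, hJ, rfl, hφx⟩ := (mem_Ephi_iff φ x).mp hx
  obtain ⟨e', J', -, hJ', rfl, -⟩ := (mem_Ephi_iff φ _).mp hy
  have hle := fun f hf => (hJ f hf).2.1
  have hle' := fun g hg => (hJ' g hg).2.1
  have hK := fun d hd => mul_eq_of_mem_productIndex (d := d) hle hle' hd
  rw [elt_sub_join_mul_elt_sub_join hle hle']
  by_cases hdeg : e * e' = 0 ∨ e * e' ∈ productIndex e e' J J'
  · exact Or.inr (elt_sub_join_eq_zero hK hdeg)
  rw [not_or] at hdeg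
  refine Or.inl ((mem_Ephi_iff φ _).mpr ⟨e * e', _, hdeg.1, fun d hd => ?_, rfl, ?_⟩)
  · exact ⟨ne_zero_of_mem_productIndex hd, hK d hd, fun h => hdeg.2 (h ▸ hd)⟩
  · rw [← elt_sub_join_mul_elt_sub_join hle hle', map_mul, hφx, zero_mul]

theorem statement_2 {E D : Type} [SemilatticeWithZero E] [NonUnitalCommRing D]
    (hD : NonUnitalAlgebra.adjoin ℤ {d : D | d * d = d} = ⊤)
    (φ : ZE E →ₙ+* D) :
    ∀ x ∈ Ephi φ, ∀ y ∈ Ephi φ, x * y ∈ Ephi φ ∪ {0} :=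
  statement_2_general φ
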